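/- Let d ≥ 1 and let U ⊆ ℝ^d be open. Let Γ : U → (Fin d → Fin d → Fin d → ℝ) be torsion-free Christoffel symbols (Γ^c_{ab} = Γ^c_{ba} pointwise), let q : U → Matrix (Fin d) (Fin d) ℝ be a differentiable symmetric-matrix-valued field with vanishing covariant derivative, i.e. ∂_c q_{ab} − ∑_e Γ^e_{ca} q_{eb} − ∑_e Γ^e_{cb} q_{ae} = 0 on U for all indices a,b,c, and let ℓ : U → ℝ^d be a differentiable vector field with ∑_b q_{ab} ℓ^b = 0 on U for all a. Then the Lie derivative of q along ℓ vanishes: for all a,b and all points of U, ∑_c ℓ^c ∂_c q_{ab} + ∑_c q_{cb} ∂_a ℓ^c + ∑_c q_{ac} ∂_b ℓ^c = 0. -/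

import Mathlib

/-!
Differentiating the null condition `q_{ac} ℓ^c = 0` turns the two `q ∂ℓ` terms of the Lie
derivative into `-ℓ^c ∂_a q_{bc}` and `-ℓ^c ∂_b q_{ac}`, so `(ℒ_ℓ q)_{ab}` equals
`ℓ^c (∂_c q_{ab} - ∂_a q_{bc} - ∂_b q_{ac})`. Substituting `∂q = Γq + Γq` from `∇q = 0`, the
symmetries of `Γ` and `q` cancel everything except `-2 Γ^e_{ab} q_{ec}`, which is killed by
contraction with the null vector `ℓ^c`.
-/

open Filter Topology

/-- The `a`-th partial (Fréchet) derivative of a function `g : ℝ^d → ℝ` at `x`. -/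
noncomputable def pderiv' {d : ℕ} (a : Fin d) (g : (Fin d → ℝ) → ℝ)
    (x : Fin d → ℝ) : ℝ :=
  fderiv ℝ g x (Pi.single a 1)

section Leibniz

variable {ι E : Type*} [Fintype ι] [NormedAddCommGroup E] [NormedSpace ℝ E]

theorem sum_mul_fderiv_apply_eq_neg_of_eventually_sum_mul_eq_zero {f g : ι → E → ℝ} {x : E}
    (hf : ∀ i, DifferentiableAt ℝ (f i) x) (hg : ∀ i, DifferentiableAt ℝ (g i) x)
    (h : (fun y => ∑ i, f i y * g i y) =ᶠ[𝓝 x] fun _ => 0) (v : E) :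
    ∑ i, f i x * fderiv ℝ (g i) x v = -∑ i, g i x * fderiv ℝ (f i) x v := by
  have hderiv : HasFDerivAt (fun y => ∑ i, f i y * g i y)
      (∑ i, (f i x • fderiv ℝ (g i) x + g i x • fderiv ℝ (f i) x)) x :=
    HasFDerivAt.fun_sum fun i _ => (hf i).hasFDerivAt.mul (hg i).hasFDerivAt
  have hzero := hderiv.fderiv.symm.trans (h.fderiv_eq.trans (fderiv_const_apply 0))
  have hv := congrArg (fun L : E →L[ℝ] ℝ => L v) hzero
  simp only [_root_.sum_apply, _root_.add_apply, _root_.smul_apply, _root_.zero_apply,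
    smul_eq_mul, Finset.sum_add_distrib] at hv
  exact eq_neg_of_add_eq_zero_left hv

theorem sum_mul_pderiv'_eq_neg_of_sum_mul_eq_zero {d : ℕ} {U : Set (Fin d → ℝ)}
    (hU : IsOpen U) {f g : ι → (Fin d → ℝ) → ℝ}
    (hf : ∀ i, ∀ x ∈ U, DifferentiableAt ℝ (f i) x)
    (hg : ∀ i, ∀ x ∈ U, DifferentiableAt ℝ (g i) x)
    (h : ∀ y ∈ U, ∑ i, f i y * g i y = 0) {x : Fin d → ℝ} (hx : x ∈ U) (a : Fin d) :
    ∑ i, f i x * pderiv' a (g i) x = -∑ i, g i x * pderiv' a (f i) x :=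
  sum_mul_fderiv_apply_eq_neg_of_eventually_sum_mul_eq_zero (fun i => hf i x hx)
    (fun i => hg i x hx) (eventually_of_mem (hU.mem_nhds hx) h) _

end Leibniz

section Connection

variable {ι R : Type*} [Fintype ι] [CommRing R]
  {Γ : ι → ι → ι → R} {q : ι → ι → R} {dq : ι → ι → ι → R}

theorem cyclic_difference_eq_neg_two_christoffel (hΓ : ∀ e a b, Γ e a b = Γ e b a)
    (hq : ∀ a b, q a b = q b a)
    (hdq : ∀ c a b, dq c a b = ∑ e, Γ e c a * q e b + ∑ e, Γ e c b * q a e) (a b c : ι) :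
    dq c a b - dq a b c - dq b a c = -(2 * ∑ e, Γ e a b * q e c) := by
  simp only [hdq, Finset.mul_sum, ← Finset.sum_neg_distrib, ← Finset.sum_add_distrib,
    ← Finset.sum_sub_distrib]
  refine Finset.sum_congr rfl fun e _ => ?_
  rw [hΓ e c a, hΓ e c b, hΓ e b a, hq e b]
  ring

theorem sum_mul_sum_mul_eq_zero_of_null {ℓ : ι → R} (hnull : ∀ a, ∑ b, q a b * ℓ b = 0)
    (w : ι → R) : ∑ c, ℓ c * ∑ e, w e * q e c = 0 := by
  simp only [Finset.mul_sum]
  rw [Finset.sum_comm]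
  refine Finset.sum_eq_zero fun e _ => ?_
  rw [← mul_zero (w e), ← hnull e, Finset.mul_sum]
  exact Finset.sum_congr rfl fun c _ => by ring

end Connection

theorem stmt_15_general (d : ℕ) (U : Set (Fin d → ℝ)) (hU : IsOpen U)
    (Γ : (Fin d → ℝ) → Fin d → Fin d → Fin d → ℝ)
    (q : (Fin d → ℝ) → Fin d → Fin d → ℝ)
    (ℓ : (Fin d → ℝ) → Fin d → ℝ)
    (hΓtf : ∀ x ∈ U, ∀ c a b : Fin d, Γ x c a b = Γ x c b a)
    (hqsymm : ∀ x ∈ U, ∀ a b : Fin d, q x a b = q x b a)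
    (hqdiff : ∀ a b : Fin d, ∀ x ∈ U, DifferentiableAt ℝ (fun y => q y a b) x)
    (hℓdiff : ∀ b : Fin d, ∀ x ∈ U, DifferentiableAt ℝ (fun y => ℓ y b) x)
    (hcov : ∀ x ∈ U, ∀ c a b : Fin d,
      pderiv' c (fun y => q y a b) x - (∑ e, Γ x e c a * q x e b)
        - (∑ e, Γ x e c b * q x a e) = 0)
    (hnull : ∀ x ∈ U, ∀ a : Fin d, (∑ b, q x a b * ℓ x b) = 0) :
    ∀ x ∈ U, ∀ a b : Fin d,
      (∑ c, ℓ x c * pderiv' c (fun y => q y a b) x)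
        + (∑ c, q x c b * pderiv' a (fun y => ℓ y c) x)
        + (∑ c, q x a c * pderiv' b (fun y => ℓ y c) x) = 0 := by
  intro x hx a b
  have hleibniz (a b : Fin d) := sum_mul_pderiv'_eq_neg_of_sum_mul_eq_zero hU
    (f := fun c y => q y b c) (g := fun c y => ℓ y c) (hqdiff b) hℓdiff
    (fun y hy => hnull y hy b) hx a
  have hdq (c a b : Fin d) : pderiv' c (fun y => q y a b) x
      = ∑ e, Γ x e c a * q x e b + ∑ e, Γ x e c b * q x a e := by
    linarith [hcov x hx c a b]
  have hcyclic := cyclic_difference_eq_neg_two_christoffel (hΓtf x hx) (hqsymm x hx) hdq a b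
  simp only [hqsymm x hx _ b]
  rw [hleibniz a b, hleibniz b a]
  calc _ = ∑ c, ℓ x c * (pderiv' c (fun y => q y a b) x - pderiv' a (fun y => q y b c) x
          - pderiv' b (fun y => q y a c) x) := by
        simp only [mul_sub, Finset.sum_sub_distrib]; ring
    _ = -2 * ∑ c, ℓ x c * ∑ e, Γ x e a b * q x e c := by
        rw [Finset.mul_sum]; exact Finset.sum_congr rfl fun c _ => by rw [hcyclic]; ring
    _ = 0 := by rw [sum_mul_sum_mul_eq_zero_of_null (hnull x hx), mul_zero]

/-- Coordinate form of the paper's Lemma on abstract non-expanding null surface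
geometry: if a torsion-free connection `Γ` annihilates the symmetric 2-tensor `q`
(`∇_c q_{ab} = 0`) and the vector field `ℓ` satisfies `q_{ab} ℓ^b = 0`, then the
Lie derivative of `q` along `ℓ` vanishes:
`ℓ^c ∂_c q_{ab} + q_{cb} ∂_a ℓ^c + q_{ac} ∂_b ℓ^c = 0` on `U`. -/
theorem stmt_15 (d : ℕ) (hd : 1 ≤ d) (U : Set (Fin d → ℝ)) (hU : IsOpen U)
    (Γ : (Fin d → ℝ) → Fin d → Fin d → Fin d → ℝ)
    (q : (Fin d → ℝ) → Fin d → Fin d → ℝ)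
    (ℓ : (Fin d → ℝ) → Fin d → ℝ)
    (hΓtf : ∀ x ∈ U, ∀ c a b : Fin d, Γ x c a b = Γ x c b a)
    (hqsymm : ∀ x ∈ U, ∀ a b : Fin d, q x a b = q x b a)
    (hqdiff : ∀ a b : Fin d, ∀ x ∈ U, DifferentiableAt ℝ (fun y => q y a b) x)
    (hℓdiff : ∀ b : Fin d, ∀ x ∈ U, DifferentiableAt ℝ (fun y => ℓ y b) x)
    (hcov : ∀ x ∈ U, ∀ c a b : Fin d,
      pderiv' c (fun y => q y a b) x - (∑ e, Γ x e c a * q x e b)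
        - (∑ e, Γ x e c b * q x a e) = 0)
    (hnull : ∀ x ∈ U, ∀ a : Fin d, (∑ b, q x a b * ℓ x b) = 0) :
    ∀ x ∈ U, ∀ a b : Fin d,
      (∑ c, ℓ x c * pderiv' c (fun y => q y a b) x)
        + (∑ c, q x c b * pderiv' a (fun y => ℓ y c) x)
        + (∑ c, q x a c * pderiv' b (fun y => ℓ y c) x) = 0 :=
  stmt_15_general d U hU Γ q ℓ hΓtf hqsymm hqdiff hℓdiff hcov hnull
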